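/- For every k ∈ {0, ..., n}, the operation f : A^{m^{2^n}+1} → A is compatible with the relation S_k: whenever M is an (m+1) × (m^{2^n}+1) matrix over A all of whose columns belong to S_k, the tuple obtained by applying f to each row of M belongs to S_k. -/
import Mathlib


/- The universe `A = {a, 0, 1, ..., n}` of size `n+2` is encoded as `Fin (n+2)`,
where `a` is encoded as `0` and the element `i ∈ {0, ..., n}` is encoded as `i+1`. -/

/-- The `(m+1)`-ary relation `S_i`: all tuples `(x_0, …, x_m)` with
`x_0 ∈ {a,0,…,i-1}` (encoded value `≤ i`) and `x_1, …, x_m ∈ {a, i}` (encoded value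
`0` or `i+1`), except the tuple `(a, i, …, i)`, together with the constant tuples
`(j, …, j)` for `j ∈ {i+1, …, n}` (encoded value `≥ i+2`). -/
def Srel (n m i : ℕ) : Set (Fin (m + 1) → Fin (n + 2)) :=
  {x | ((x 0).val ≤ i ∧ (∀ j, j ≠ 0 → ((x j).val = 0 ∨ (x j).val = i + 1)) ∧
          ¬((x 0).val = 0 ∧ ∀ j, j ≠ 0 → (x j).val = i + 1)) ∨
        (∃ c : Fin (n + 2), i + 2 ≤ c.val ∧ ∀ j, x j = c)}

/-- `L_r(x)`: the number of coordinates of `x` whose value is strictly less than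
the element `r` in the order `a < 0 < 1 < ⋯ < n` (encoded: value `< r + 1`);
for `r = n+1` this counts all coordinates. -/
def Lcnt (n : ℕ) {K : ℕ} (x : Fin K → Fin (n + 2)) (r : ℕ) : ℕ :=
  (Finset.univ.filter (fun q => (x q).val < r + 1)).card

/-- `F_x = {r ∈ {0, …, n} : L_{r+1}(x) > m^(2^r) · L_r(x)}`. -/
def FsetA (n m : ℕ) {K : ℕ} (x : Fin K → Fin (n + 2)) : Finset ℕ :=
  (Finset.range (n + 1)).filter (fun r => m ^ 2 ^ r * Lcnt n x r < Lcnt n x (r + 1))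

/-- The operation `f : A^(m^(2^n)+1) → A`: `f(x) = max F_x` if `F_x ≠ ∅` (the
element `max F_x`, encoded as `max F_x + 1`), and `f(x) = a` otherwise. -/
def fop (n m : ℕ) (x : Fin (m ^ 2 ^ n + 1) → Fin (n + 2)) : Fin (n + 2) :=
  if h : (FsetA n m x).Nonempty then
    ⟨(FsetA n m x).max' h + 1, by
      have hmem := (FsetA n m x).max'_mem h
      have h2 : (FsetA n m x).max' h < n + 1 :=
        Finset.mem_range.mp (Finset.mem_filter.mp hmem).1
      omega⟩
  else 0

lemma fop_val_of_nonempty (n m : ℕ) (x : Fin (m ^ 2 ^ n + 1) → Fin (n + 2))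
    (h : (FsetA n m x).Nonempty) :
    (fop n m x).val = (FsetA n m x).max' h + 1 := by
  unfold fop
  rw [dif_pos h]

lemma fop_val_of_empty (n m : ℕ) (x : Fin (m ^ 2 ^ n + 1) → Fin (n + 2))
    (h : ¬ (FsetA n m x).Nonempty) :
    (fop n m x).val = 0 := by
  unfold fop
  rw [dif_neg h]
  rfl

/-- For every `k ∈ {0, …, n}`, the operation `f` is compatible with `S_k`:
if every column of the `(m+1) × (m^(2^n)+1)` matrix `M` lies in `S_k`, then the
tuple of the values of `f` on the rows of `M` lies in `S_k`. -/
theorem stmt11 (n m : ℕ) (hm : 2 ≤ m) (k : ℕ) (hk : k ≤ n)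
    (M : Fin (m + 1) → Fin (m ^ 2 ^ n + 1) → Fin (n + 2))
    (hM : ∀ col, (fun row => M row col) ∈ Srel n m k) :
    (fun row => fop n m (M row)) ∈ Srel n m k := by
  classical
  have hcol : ∀ col, ((M 0 col).val ≤ k ∧
      (∀ j, j ≠ 0 → ((M j col).val = 0 ∨ (M j col).val = k + 1)) ∧
      ¬((M 0 col).val = 0 ∧ ∀ j, j ≠ 0 → (M j col).val = k + 1)) ∨
      (∃ c : Fin (n + 2), k + 2 ≤ c.val ∧ ∀ j, M j col = c) := fun col => hM col
  have hA : ∀ (j : Fin (m + 1)), j ≠ 0 → ∀ r, r ≤ k →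
      Lcnt n (M j) r = Lcnt n (M j) 0 := by
    intro j hj r hr
    unfold Lcnt
    apply congrArg Finset.card
    apply Finset.filter_congr
    intro q _
    rcases hcol q with ⟨h0, hv, _⟩ | ⟨c, hc, hcc⟩
    · have := hv j hj; omega
    · have h1 : (M j q).val = c.val := by rw [hcc j]
      omega
  have hB : ∀ (j : Fin (m + 1)) (r : ℕ), k + 1 ≤ r →
      Lcnt n (M j) r = Lcnt n (M 0) r := by
    intro j r hr
    unfold Lcnt
    apply congrArg Finset.card
    apply Finset.filter_congr
    intro q _
    rcases hcol q with ⟨h0, hv, _⟩ | ⟨c, hc, hcc⟩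
    · by_cases hj : j = 0
      · subst hj; omega
      · have := hv j hj; omega
    · have h1 : (M j q).val = c.val := by rw [hcc j]
      have h2 : (M 0 q).val = c.val := by rw [hcc 0]
      omega
  have hB' : Lcnt n (M 0) (k + 1) = Lcnt n (M 0) k := by
    unfold Lcnt
    apply congrArg Finset.card
    apply Finset.filter_congr
    intro q _
    rcases hcol q with ⟨h0, _, _⟩ | ⟨c, hc, hcc⟩
    · omega
    · have h2 : (M 0 q).val = c.val := by rw [hcc 0]
      omega
  have hTj : ∀ j, Lcnt n (M j) (k + 1) = Lcnt n (M 0) k :=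
    fun j => (hB j (k + 1) le_rfl).trans hB'
  have hmpow : ∀ r : ℕ, 1 ≤ m ^ 2 ^ r := fun r => Nat.one_le_pow _ _ (by omega)
  show ((fop n m (M 0)).val ≤ k ∧
      (∀ j : Fin (m + 1), j ≠ 0 →
        ((fop n m (M j)).val = 0 ∨ (fop n m (M j)).val = k + 1)) ∧
      ¬((fop n m (M 0)).val = 0 ∧
        ∀ j : Fin (m + 1), j ≠ 0 → (fop n m (M j)).val = k + 1)) ∨
      (∃ c : Fin (n + 2), k + 2 ≤ c.val ∧ ∀ j, fop n m (M j) = c)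
  by_cases hH : ∃ r ∈ Finset.range (n + 1),
      k < r ∧ m ^ 2 ^ r * Lcnt n (M 0) r < Lcnt n (M 0) (r + 1)
  · -- Case 1: there is a "high" index r > k where the row-0 condition holds.
    have hHne : ((Finset.range (n + 1)).filter
        (fun r => k < r ∧ m ^ 2 ^ r * Lcnt n (M 0) r < Lcnt n (M 0) (r + 1))).Nonempty := by
      obtain ⟨r, hr1, hr2⟩ := hH
      exact ⟨r, Finset.mem_filter.mpr ⟨hr1, hr2⟩⟩
    obtain ⟨R, hRmem, hRmax⟩ : ∃ R, R ∈ (Finset.range (n + 1)).filter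
        (fun r => k < r ∧ m ^ 2 ^ r * Lcnt n (M 0) r < Lcnt n (M 0) (r + 1)) ∧
        ∀ s ∈ (Finset.range (n + 1)).filter
          (fun r => k < r ∧ m ^ 2 ^ r * Lcnt n (M 0) r < Lcnt n (M 0) (r + 1)), s ≤ R :=
      ⟨_, Finset.max'_mem _ hHne, fun s hs => Finset.le_max' _ s hs⟩
    have hRmem' := Finset.mem_filter.mp hRmem
    have hRrange : R ∈ Finset.range (n + 1) := hRmem'.1
    have hRk : k < R := hRmem'.2.1
    have hRcond : m ^ 2 ^ R * Lcnt n (M 0) R < Lcnt n (M 0) (R + 1) := hRmem'.2.2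
    have hmemF : ∀ j, R ∈ FsetA n m (M j) := by
      intro j
      unfold FsetA
      refine Finset.mem_filter.mpr ⟨hRrange, ?_⟩
      rw [hB j R (by omega), hB j (R + 1) (by omega)]
      exact hRcond
    have hbound : ∀ j, ∀ s ∈ FsetA n m (M j), s ≤ R := by
      intro j s hs
      have hs' := Finset.mem_filter.mp hs
      have hsn : s ∈ Finset.range (n + 1) := hs'.1
      by_cases hsk : s ≤ k
      · omega
      · apply hRmax
        refine Finset.mem_filter.mpr ⟨hsn, by omega, ?_⟩
        have hc := hs'.2
        rwa [hB j s (by omega), hB j (s + 1) (by omega)] at hc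
    have hval : ∀ j, (fop n m (M j)).val = R + 1 := by
      intro j
      have hne : (FsetA n m (M j)).Nonempty := ⟨R, hmemF j⟩
      have hmx : (FsetA n m (M j)).max' hne = R :=
        le_antisymm (Finset.max'_le _ _ _ (hbound j)) (Finset.le_max' _ _ (hmemF j))
      rw [fop_val_of_nonempty n m (M j) hne, hmx]
    right
    refine ⟨fop n m (M 0), by rw [hval 0]; omega, fun j => ?_⟩
    apply Fin.ext
    rw [hval j, hval 0]
  · -- Case 2: no high index.
    push_neg at hH
    have hF0 : ∀ r ∈ FsetA n m (M 0), r < k := by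
      intro r hr
      have hr' := Finset.mem_filter.mp hr
      have hc := hr'.2
      by_contra hcon
      push_neg at hcon
      rcases Nat.eq_or_lt_of_le hcon with heq | hlt
      · subst heq
        rw [hTj 0] at hc
        have h1 : Lcnt n (M 0) k ≤ m ^ 2 ^ k * Lcnt n (M 0) k :=
          Nat.le_mul_of_pos_left _ (hmpow k)
        omega
      · have := hH r hr'.1 hlt
        omega
    have hFj : ∀ (j : Fin (m + 1)), j ≠ 0 → ∀ r ∈ FsetA n m (M j), r = k := by
      intro j hj r hr
      have hr' := Finset.mem_filter.mp hr
      have hc := hr'.2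
      by_contra hcon
      rcases Nat.lt_or_ge r k with hlt | hge
      · rw [hA j hj r (by omega), hA j hj (r + 1) (by omega)] at hc
        have h1 : Lcnt n (M j) 0 ≤ m ^ 2 ^ r * Lcnt n (M j) 0 :=
          Nat.le_mul_of_pos_left _ (hmpow r)
        omega
      · have hlt2 : k < r := by omega
        rw [hB j r (by omega), hB j (r + 1) (by omega)] at hc
        have := hH r hr'.1 hlt2
        omega
    left
    refine ⟨?_, ?_, ?_⟩
    · by_cases hne : (FsetA n m (M 0)).Nonempty
      · have h1 := hF0 _ (Finset.max'_mem _ hne)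
        have h2 := fop_val_of_nonempty n m (M 0) hne
        omega
      · rw [fop_val_of_empty n m (M 0) hne]
        omega
    · intro j hj
      by_cases hne : (FsetA n m (M j)).Nonempty
      · right
        have h1 := hFj j hj _ (Finset.max'_mem _ hne)
        rw [fop_val_of_nonempty n m (M j) hne, h1]
      · left
        exact fop_val_of_empty n m (M j) hne
    · rintro ⟨h0, hall⟩
      have hF0e : ¬ (FsetA n m (M 0)).Nonempty := by
        intro hne
        rw [fop_val_of_nonempty n m (M 0) hne] at h0
        omega
      have hineq : ∀ r, r ≤ n → Lcnt n (M 0) (r + 1) ≤ m ^ 2 ^ r * Lcnt n (M 0) r := by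
        intro r hr
        by_contra hcc
        exact hF0e ⟨r, Finset.mem_filter.mpr ⟨Finset.mem_range.mpr (by omega), by omega⟩⟩
      have chain : ∀ r, r ≤ k → Lcnt n (M 0) r ≤ m ^ (2 ^ r - 1) * Lcnt n (M 0) 0 := by
        intro r
        induction r with
        | zero => intro _; simp
        | succ r ih =>
          intro hr
          have h1 := hineq r (by omega)
          have h2 := ih (by omega)
          have h3 : 2 ^ (r + 1) = 2 ^ r * 2 := pow_succ 2 r
          have h4 : 1 ≤ 2 ^ r := Nat.one_le_two_pow
          calc Lcnt n (M 0) (r + 1) ≤ m ^ 2 ^ r * Lcnt n (M 0) r := h1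
            _ ≤ m ^ 2 ^ r * (m ^ (2 ^ r - 1) * Lcnt n (M 0) 0) :=
                Nat.mul_le_mul_left _ h2
            _ = m ^ (2 ^ (r + 1) - 1) * Lcnt n (M 0) 0 := by
                rw [← mul_assoc, ← pow_add]
                congr 2
                omega
      have hz : ∀ (j : Fin (m + 1)), j ≠ 0 →
          m ^ 2 ^ k * Lcnt n (M j) 0 < Lcnt n (M 0) k := by
        intro j hj
        have hk1 := hall j hj
        by_cases hne : (FsetA n m (M j)).Nonempty
        · rw [fop_val_of_nonempty n m (M j) hne] at hk1
          have hmax : (FsetA n m (M j)).max' hne = k := by omega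
          have hkm : k ∈ FsetA n m (M j) := hmax ▸ Finset.max'_mem _ hne
          have hc := (Finset.mem_filter.mp hkm).2
          rw [hA j hj k le_rfl, hTj j] at hc
          exact hc
        · rw [fop_val_of_empty n m (M j) hne] at hk1
          omega
      have hsub : Finset.univ.filter (fun q => (M 0 q).val < 0 + 1) ⊆
          (Finset.univ.erase (0 : Fin (m + 1))).biUnion
            (fun j => Finset.univ.filter (fun q => (M j q).val < 0 + 1)) := by
        intro q hq
        have hq' : (M 0 q).val < 0 + 1 := (Finset.mem_filter.mp hq).2
        rcases hcol q with ⟨h0c, hv, hnot⟩ | ⟨c, hc, hcc⟩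
        · push_neg at hnot
          obtain ⟨j, hj, hjne⟩ := hnot (by omega)
          have hvj := hv j hj
          exact Finset.mem_biUnion.mpr ⟨j, Finset.mem_erase.mpr ⟨hj, Finset.mem_univ _⟩,
            Finset.mem_filter.mpr ⟨Finset.mem_univ _, by omega⟩⟩
        · have h2 : (M 0 q).val = c.val := by rw [hcc 0]
          omega
      have hsum : Lcnt n (M 0) 0 ≤
          ∑ j ∈ Finset.univ.erase (0 : Fin (m + 1)), Lcnt n (M j) 0 := by
        unfold Lcnt
        exact le_trans (Finset.card_le_card hsub) Finset.card_biUnion_le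
      have hone : (1 : Fin (m + 1)) ≠ 0 := by
        intro h
        have := congrArg Fin.val h
        simp [Fin.val_one'] at this
        omega
      obtain ⟨j0, hj0s, hj0⟩ := Finset.exists_mem_eq_sup
        (Finset.univ.erase (0 : Fin (m + 1)))
        ⟨1, Finset.mem_erase.mpr ⟨hone, Finset.mem_univ _⟩⟩
        (fun j => Lcnt n (M j) 0)
      have hcard : (Finset.univ.erase (0 : Fin (m + 1))).card = m := by
        rw [Finset.card_erase_of_mem (Finset.mem_univ _), Finset.card_univ, Fintype.card_fin]
        omega
      have hsumle : ∑ j ∈ Finset.univ.erase (0 : Fin (m + 1)), Lcnt n (M j) 0 ≤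
          m * Lcnt n (M j0) 0 := by
        have := Finset.sum_le_card_nsmul (Finset.univ.erase (0 : Fin (m + 1)))
          (fun j => Lcnt n (M j) 0) (Lcnt n (M j0) 0)
          (fun j hj => (Finset.le_sup hj).trans (le_of_eq hj0))
        simp only [hcard, smul_eq_mul] at this
        exact this
      have h1 : Lcnt n (M 0) k ≤ m ^ (2 ^ k - 1) * Lcnt n (M 0) 0 := chain k le_rfl
      have h2 := hz j0 (Finset.mem_erase.mp hj0s).1
      have h3 : m ^ (2 ^ k - 1) * m = m ^ 2 ^ k := by
        rw [← pow_succ]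
        congr 1
        have : 1 ≤ 2 ^ k := Nat.one_le_two_pow
        omega
      have h4 : Lcnt n (M 0) k ≤ m ^ 2 ^ k * Lcnt n (M j0) 0 := by
        calc Lcnt n (M 0) k ≤ m ^ (2 ^ k - 1) * Lcnt n (M 0) 0 := h1
          _ ≤ m ^ (2 ^ k - 1) * (m * Lcnt n (M j0) 0) :=
              Nat.mul_le_mul_left _ (le_trans hsum hsumle)
          _ = m ^ 2 ^ k * Lcnt n (M j0) 0 := by rw [← mul_assoc, h3]
      omega
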